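/- arXiv:1201.0057 — 3 statements merged into one kernel-verified Lean document; each statement's English description precedes it below -/
import Mathlib

section
/- Let f : ℝ → ℝ be twice differentiable with f''(u) < 0 for all u in the closed interval with endpoints u¹ ≠ u², let x¹ < x², and let g be the inverse of f' on that interval. Define the similarity interpolant U_P(x) = g( f'(u¹) + ((x − x¹)/(x² − x¹))·(f'(u²) − f'(u¹)) ) for x ∈ [x¹, x²]. Then ∫_{x¹}^{x²} U_P(x) dx = (x² − x¹) · ( (f'(u²)·u² − f(u²)) − (f'(u¹)·u¹ − f(u¹)) ) / ( f'(u²) − f'(u¹) ). -/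
/-!
The affine substitution `y = f'(u1) + ((x - x1)/(x2 - x1))(f'(u2) - f'(u1))` turns the integral
into `(x2 - x1)/(f'(u2) - f'(u1))` times `∫ g` over `[f'(u1), f'(u2)]`. Since `g` inverts `f'`,
the Legendre transform `y ↦ y g(y) - f(g(y))` has derivative `g(y) + (y - f'(g y)) g'(y) = g(y)`,
so that integral is `[u f'(u) - f(u)]` between `u1` and `u2`. Here `g` is continuous by
compactness and differentiable since `f'' ≠ 0`.
-/

open Set Filter Topology

theorem Set.LeftInvOn.continuousOn_image {X Y : Type*} [TopologicalSpace X] [TopologicalSpace Y]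
    [T2Space Y] {f : X → Y} {g : Y → X} {K : Set X} (hg : LeftInvOn g f K) (hK : IsCompact K)
    (hf : ContinuousOn f K) : ContinuousOn g (f '' K) := by
  refine continuousOn_iff_isClosed.2 fun C hC => ⟨f '' (K ∩ C), ?_, ?_⟩
  · exact ((hK.inter_right hC).image_of_continuousOn (hf.mono inter_subset_left)).isClosed
  · ext y
    constructor
    · rintro ⟨hyC, u, hu, rfl⟩
      exact ⟨⟨u, ⟨hu, by rwa [mem_preimage, hg hu] at hyC⟩, rfl⟩, u, hu, rfl⟩
    · rintro ⟨⟨u, ⟨hu, huC⟩, rfl⟩, -⟩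
      exact ⟨by rwa [mem_preimage, hg hu], u, hu, rfl⟩

theorem Set.mem_uIoo_of_mem_uIcc_of_ne {α : Type*} [LinearOrder α] {a b x : α}
    (hx : x ∈ uIcc a b) (ha : x ≠ a) (hb : x ≠ b) : x ∈ uIoo a b := by
  rcases le_total a b with hab | hab
  · rw [uIcc_of_le hab] at hx
    exact mem_uIoo_of_lt (hx.1.lt_of_ne' ha) (hx.2.lt_of_ne hb)
  · rw [uIcc_of_ge hab] at hx
    exact mem_uIoo_of_gt (hx.1.lt_of_ne' hb) (hx.2.lt_of_ne ha)

theorem hasDerivAt_mul_sub_comp_of_hasDerivAt {f g : ℝ → ℝ} {g' y : ℝ} (hg : HasDerivAt g g' y)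
    (hf : HasDerivAt f y (g y)) : HasDerivAt (fun z => z * g z - f (g z)) (g y) y :=
  (((hasDerivAt_id' y).mul hg).sub (hf.comp y hg)).congr_deriv (by ring)

theorem integral_leftInvOn_deriv {f f' f'' g : ℝ → ℝ} {a b : ℝ}
    (hf : ∀ u ∈ uIcc a b, HasDerivWithinAt f (f' u) (uIcc a b) u)
    (hf' : ∀ u ∈ uIcc a b, HasDerivWithinAt f' (f'' u) (uIcc a b) u)
    (hf'' : ∀ u ∈ uIoo a b, f'' u ≠ 0) (hg : LeftInvOn g f' (uIcc a b)) :
    ∫ y in f' a..f' b, g y = (f' b * b - f b) - (f' a * a - f a) := by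
  have hfc : ContinuousOn f (uIcc a b) := fun u hu => (hf u hu).continuousWithinAt
  have hf'c : ContinuousOn f' (uIcc a b) := fun u hu => (hf' u hu).continuousWithinAt
  have himage : uIcc (f' a) (f' b) ⊆ f' '' uIcc a b := intermediate_value_uIcc hf'c
  have hgc : ContinuousOn g (uIcc (f' a) (f' b)) :=
    (hg.continuousOn_image isCompact_uIcc hf'c).mono himage
  have hgmaps : MapsTo g (uIcc (f' a) (f' b)) (uIcc a b) := by
    intro y hy
    obtain ⟨u, hu, rfl⟩ := himage hy
    rwa [hg hu]
  have hrinv : RightInvOn g f' (uIcc (f' a) (f' b)) := by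
    intro y hy
    obtain ⟨u, hu, rfl⟩ := himage hy
    rw [hg hu]
  have hderiv : ∀ y ∈ uIoo (f' a) (f' b),
      HasDerivAt (fun z => z * g z - f (g z)) (g y) y := by
    intro y hy
    have hyJ : y ∈ uIcc (f' a) (f' b) := uIoo_subset_uIcc_self hy
    have hu : g y ∈ uIoo a b := by
      refine mem_uIoo_of_mem_uIcc_of_ne (hgmaps hyJ) (fun h => ?_) (fun h => ?_)
      · exact left_notMem_uIoo (by rwa [← hrinv hyJ, h] at hy)
      · exact right_notMem_uIoo (by rwa [← hrinv hyJ, h] at hy)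
    have hJ : uIcc (f' a) (f' b) ∈ 𝓝 y := Icc_mem_nhds hy.1 hy.2
    have hK : uIcc a b ∈ 𝓝 (g y) := Icc_mem_nhds hu.1 hu.2
    have hgd : HasDerivAt g (f'' (g y))⁻¹ y :=
      .of_local_left_inverse (hgc.continuousAt hJ) ((hf' _ (hgmaps hyJ)).hasDerivAt hK)
        (hf'' _ hu) (eventually_of_mem hJ hrinv)
    refine hasDerivAt_mul_sub_comp_of_hasDerivAt hgd ?_
    simpa only [hrinv hyJ] using (hf _ (hgmaps hyJ)).hasDerivAt hK
  have hFc : ContinuousOn (fun z => z * g z - f (g z)) (uIcc (f' a) (f' b)) :=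
    (continuousOn_id.mul hgc).sub (hfc.comp hgc hgmaps)
  rw [intervalIntegral.integral_eq_sub_of_hasDeriv_right hFc
    (fun y hy => (hderiv y hy).hasDerivWithinAt) hgc.intervalIntegrable, hg left_mem_uIcc,
    hg right_mem_uIcc]

/-- The area under the similarity interpolant
`U_P(x) = g(f'(u1) + ((x-x1)/(x2-x1))·(f'(u2)-f'(u1)))` (with `g` the inverse of `f'` on
the interval between `u1` and `u2`, `f'' < 0` there) equals
`(x2-x1) · ([f'(u)u - f(u)]_{u1}^{u2}) / ([f'(u)]_{u1}^{u2})`. -/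
theorem stmt_5 (f f' f'' g : ℝ → ℝ) (u1 u2 : ℝ) (hu : u1 ≠ u2) (x1 x2 : ℝ) (hx : x1 < x2)
    (hf : ∀ u ∈ Set.uIcc u1 u2, HasDerivWithinAt f (f' u) (Set.uIcc u1 u2) u)
    (hf' : ∀ u ∈ Set.uIcc u1 u2, HasDerivWithinAt f' (f'' u) (Set.uIcc u1 u2) u)
    (hconc : ∀ u ∈ Set.uIcc u1 u2, f'' u < 0)
    (hg : ∀ u ∈ Set.uIcc u1 u2, g (f' u) = u) :
    ∫ x in x1..x2, g (f' u1 + ((x - x1) / (x2 - x1)) * (f' u2 - f' u1)) =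
      (x2 - x1) * ((f' u2 * u2 - f u2) - (f' u1 * u1 - f u1)) / (f' u2 - f' u1) := by
  have hΔ : f' u2 - f' u1 ≠ 0 := fun h => hu <| by
    rw [← hg u1 left_mem_uIcc, ← hg u2 right_mem_uIcc, sub_eq_zero.1 h]
  have hdx : x2 - x1 ≠ 0 := sub_ne_zero.2 hx.ne'
  set c := (f' u2 - f' u1) / (x2 - x1)
  have hc : c ≠ 0 := div_ne_zero hΔ hdx
  have hlin : ∀ x, f' u1 + (x - x1) / (x2 - x1) * (f' u2 - f' u1) = c * x + (f' u1 - c * x1) :=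
    fun x => by simp only [c]; ring
  have hends : c * x1 + (f' u1 - c * x1) = f' u1 ∧ c * x2 + (f' u1 - c * x1) = f' u2 := by
    constructor <;> simp only [c] <;> field_simp <;> ring
  simp only [hlin, intervalIntegral.integral_comp_mul_add _ hc, hends,
    integral_leftInvOn_deriv hf hf' (fun u hu => (hconc u (uIoo_subset_uIcc_self hu)).ne) hg]
  simp only [c, smul_eq_mul, inv_div]
  field_simp
end

section
/- Let f : ℝ → ℝ be twice continuously differentiable with f''(s) < 0 for all s in the closed interval with endpoints u ≠ v. Then f'(u) ≠ f'(v), and the nonlinear average a(u, v) = ((f'(v)·v − f(v)) − (f'(u)·u − f(u)))/(f'(v) − f'(u)) satisfies min(u, v) < a(u, v) < max(u, v). -/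
/-!
Strict concavity makes `f'` strictly decreasing. By the mean value theorem
`f v - f u = f' c (v - u)` for some `c` strictly between `u` and `v`, and substituting this
into the nonlinear average gives `a(u, v) = u + θ (v - u)` with
`θ = (f' c - f' v) / (f' u - f' v)`, which lies in `(0, 1)` because `f' c` lies strictly
between `f' v` and `f' u`.
-/

open Set

noncomputable def nonlinearAverage (f f' : ℝ → ℝ) (u v : ℝ) : ℝ :=
  ((f' v * v - f v) - (f' u * u - f u)) / (f' v - f' u)

theorem nonlinearAverage_comm (f f' : ℝ → ℝ) (u v : ℝ) :
    nonlinearAverage f f' u v = nonlinearAverage f f' v u := by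
  rw [nonlinearAverage, nonlinearAverage, ← neg_div_neg_eq, neg_sub, neg_sub]

theorem nonlinearAverage_mem_Ioo {f f' : ℝ → ℝ} {u v : ℝ} (huv : u < v)
    (hf : ∀ s ∈ Icc u v, HasDerivWithinAt f (f' s) (Icc u v) s)
    (hf' : StrictAntiOn f' (Icc u v)) :
    nonlinearAverage f f' u v ∈ Ioo u v := by
  obtain ⟨c, hc, hslope⟩ := exists_hasDerivAt_eq_slope f f' huv
    (fun s hs ↦ (hf s hs).continuousWithinAt)
    (fun s hs ↦ (hf s (Ioo_subset_Icc_self hs)).hasDerivAt (Icc_mem_nhds hs.1 hs.2))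
  have hvc : f' v < f' c := hf' (Ioo_subset_Icc_self hc) (right_mem_Icc.2 huv.le) hc.2
  have hcu : f' c < f' u := hf' (left_mem_Icc.2 huv.le) (Ioo_subset_Icc_self hc) hc.1
  set θ := (f' c - f' v) / (f' u - f' v)
  have hθ_pos : 0 < θ := div_pos (sub_pos.2 hvc) (sub_pos.2 (hvc.trans hcu))
  have hθ_lt_one : θ < 1 := (div_lt_one (sub_pos.2 (hvc.trans hcu))).2 (by linarith)
  have haverage : nonlinearAverage f f' u v = u + θ * (v - u) := by
    have hdiff : f v - f u = f' c * (v - u) := by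
      rw [hslope, div_mul_cancel₀ _ (sub_ne_zero.2 huv.ne')]
    have hd : f' u - f' v ≠ 0 := (sub_pos.2 (hvc.trans hcu)).ne'
    have hθd : θ * (f' u - f' v) = f' c - f' v := div_mul_cancel₀ _ hd
    rw [nonlinearAverage, ← neg_div_neg_eq, neg_sub, neg_sub, div_eq_iff hd]
    linear_combination hdiff - (v - u) * hθd
  rw [haverage]
  constructor <;> nlinarith

theorem nonlinearAverage_mem_uIoo {f f' : ℝ → ℝ} {u v : ℝ} (huv : u ≠ v)
    (hf : ∀ s ∈ uIcc u v, HasDerivWithinAt f (f' s) (uIcc u v) s)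
    (hf' : StrictAntiOn f' (uIcc u v)) :
    nonlinearAverage f f' u v ∈ uIoo u v := by
  wlog h : u < v generalizing u v
  · rw [nonlinearAverage_comm, uIoo_comm]
    rw [uIcc_comm] at hf hf'
    exact this huv.symm hf hf' (huv.lt_or_gt.resolve_left h)
  rw [uIoo_of_lt h]
  rw [uIcc_of_lt h] at hf hf'
  exact nonlinearAverage_mem_Ioo h hf hf'

theorem stmt_7_general (f f' f'' : ℝ → ℝ) (u v : ℝ) (huv : u ≠ v)
    (hf : ∀ s ∈ Set.uIcc u v, HasDerivWithinAt f (f' s) (Set.uIcc u v) s)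
    (hf' : ∀ s ∈ Set.uIcc u v, HasDerivWithinAt f' (f'' s) (Set.uIcc u v) s)
    (hconc : ∀ s ∈ Set.uIcc u v, f'' s < 0) :
    f' u ≠ f' v ∧
    min u v < ((f' v * v - f v) - (f' u * u - f u)) / (f' v - f' u) ∧
    ((f' v * v - f v) - (f' u * u - f u)) / (f' v - f' u) < max u v := by
  have hanti : StrictAntiOn f' (uIcc u v) :=
    strictAntiOn_of_hasDerivWithinAt_neg (convex_uIcc u v)
      (fun s hs ↦ (hf' s hs).continuousWithinAt)
      (fun s hs ↦ (hf' s (interior_subset hs)).mono interior_subset)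
      (fun s hs ↦ hconc s (interior_subset hs))
  exact ⟨hanti.injOn.ne left_mem_uIcc right_mem_uIcc huv,
    nonlinearAverage_mem_uIoo huv hf hanti⟩

/-- For a flux `f` twice continuously differentiable with `f'' < 0` on the
closed interval with endpoints `u ≠ v`, one has `f'(u) ≠ f'(v)` and the nonlinear average
`a(u,v) = ((f'(v)v - f(v)) - (f'(u)u - f(u)))/(f'(v) - f'(u))` lies strictly between
`min u v` and `max u v`. -/
theorem stmt_7 (f f' f'' : ℝ → ℝ) (u v : ℝ) (huv : u ≠ v)
    (hf : ∀ s ∈ Set.uIcc u v, HasDerivWithinAt f (f' s) (Set.uIcc u v) s)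
    (hf' : ∀ s ∈ Set.uIcc u v, HasDerivWithinAt f' (f'' s) (Set.uIcc u v) s)
    (hf''c : ContinuousOn f'' (Set.uIcc u v))
    (hconc : ∀ s ∈ Set.uIcc u v, f'' s < 0) :
    f' u ≠ f' v ∧
    min u v < ((f' v * v - f v) - (f' u * u - f u)) / (f' v - f' u) ∧
    ((f' v * v - f v) - (f' u * u - f u)) / (f' v - f' u) < max u v :=
  stmt_7_general f f' f'' u v huv hf hf' hconc
end

section
/- Let f₁, f₂ : ℝ → ℝ be continuously differentiable, and let u₁, u₂ : ℝ × ℝ → ℝ be continuously differentiable solutions of ∂uₖ/∂t + ∂(fₖ(uₖ))/∂x = 0 (k = 1, 2) on open sets containing the relevant regions. Let c₁, c₂ be constants with f₁(c₁) = f₂(c₂), let X₁(t) = L₁ + f₁'(c₁)·t with u₁(X₁(t), t) = c₁ for all t ∈ [0, T], and X₂(t) = f₂'(c₂)·t with u₂(X₂(t), t) = c₂ for all t ∈ [0, T]. Assume the coupling condition f₁(u₁(L₁, t)) = f₂(u₂(0, t)) for all t ∈ [0, T]. Define I₁(t) = ∫_{L₁}^{X₁(t)} u₁(x, t) dx and I₂(t)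 = ∫_0^{X₂(t)} u₂(x, t) dx. Then for all t ∈ [0, T], I₂(t) − I₁(t) = (c₂·f₂'(c₂) − c₁·f₁'(c₁))·t. -/
/-!
Each area is the integral of `u` over a segment `[a, X t]` whose endpoint moves with a
characteristic speed. Differentiating under the integral sign and integrating the conservation
law `∂ₜu = -∂ₓ f(u)` in space gives the flux balance
`d/dt ∫_a^{X t} u = X'·u(X t) + f(u(a)) - f(u(X t))`.
Along the extremal particles `u(X t) = c`, the fluxes at the node cancel by the coupling
condition, and `f₁(c₁) = f₂(c₂)` cancels the remaining flux terms, so `I₂ - I₁` has the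
constant derivative `c₂f₂'(c₂) - c₁f₁'(c₁)` and vanishes at `t = 0`.
-/

open intervalIntegral MeasureTheory Set ContinuousLinearMap

section
variable {u : ℝ × ℝ → ℝ}

theorem hasDerivAt_slice_snd {x t : ℝ} (hu : DifferentiableAt ℝ u (x, t)) :
    HasDerivAt (fun s => u (x, s)) (fderiv ℝ u (x, t) (0, 1)) t :=
  hu.hasFDerivAt.comp_hasDerivAt t ((hasDerivAt_const t x).prodMk (hasDerivAt_id t))

theorem hasDerivAt_intervalIntegral_snd (hu : ContDiff ℝ 1 u) (a b t₀ : ℝ) :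
    HasDerivAt (fun t => ∫ x in a..b, u (x, t))
      (∫ x in a..b, fderiv ℝ u (x, t₀) (0, 1)) t₀ := by
  have hu' := hu.continuous_fderiv one_ne_zero
  have hcont := hu.continuous
  obtain ⟨M, hM⟩ := (isCompact_uIcc.prod (isCompact_closedBall t₀ 1))
    |>.exists_bound_of_continuousOn (f := fun p => fderiv ℝ u p (0, 1)) (by fun_prop)
  refine (hasDerivAt_integral_of_dominated_loc_of_deriv_le (μ := volume) (bound := fun _ => M)
    (F := fun t x => u (x, t)) (F' := fun t x => fderiv ℝ u (x, t) (0, 1))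
    (Metric.closedBall_mem_nhds t₀ one_pos) (.of_forall fun t => ?_) ?_ ?_ ?_
    intervalIntegrable_const ?_).2
  · exact Continuous.aestronglyMeasurable (by fun_prop)
  · exact Continuous.intervalIntegrable (by fun_prop) _ _
  · exact Continuous.aestronglyMeasurable (by fun_prop)
  · exact .of_forall fun x hx t ht => hM (x, t) ⟨uIoc_subset_uIcc hx, ht⟩
  · exact .of_forall fun x _ t _ => hasDerivAt_slice_snd (hu.differentiable one_ne_zero _)

theorem hasStrictFDerivAt_intervalIntegral_fst (hu : ContDiff ℝ 1 u) (a : ℝ) (p : ℝ × ℝ) :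
    HasStrictFDerivAt (fun q : ℝ × ℝ => ∫ x in a..q.1, u (x, q.2))
      ((toSpanSingleton ℝ (u p)).coprod
        (toSpanSingleton ℝ (∫ x in a..p.1, fderiv ℝ u (x, p.2) (0, 1)))) p := by
  have hu' := hu.continuous_fderiv one_ne_zero
  have hcont := hu.continuous
  refine hasStrictFDerivAt_uncurry_coprod (f := fun y s => ∫ x in a..y, u (x, s))
    (f₁ := fun y s => toSpanSingleton ℝ (u (y, s)))
    (f₂ := fun y s => toSpanSingleton ℝ (∫ x in a..y, fderiv ℝ u (x, s) (0, 1)))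
    (.of_forall fun q => ?_) (.of_forall fun q => ?_) ?_ ?_
  · exact (Continuous.integral_hasStrictDerivAt (by fun_prop) a q.1).hasDerivAt
  · exact hasDerivAt_intervalIntegral_snd hu a q.1 q.2
  · exact (toSpanSingletonCLE.continuous.comp hcont).continuousAt
  · refine (toSpanSingletonCLE.continuous.comp ?_).continuousAt
    exact continuous_parametric_intervalIntegral_of_continuous (by fun_prop) continuous_fst

theorem hasDerivAt_intervalIntegral_of_hasDerivAt_upper (hu : ContDiff ℝ 1 u) (a : ℝ)
    {X : ℝ → ℝ} {X' t₀ : ℝ} (hX : HasDerivAt X X' t₀) :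
    HasDerivAt (fun t => ∫ x in a..X t, u (x, t))
      (X' * u (X t₀, t₀) + ∫ x in a..X t₀, fderiv ℝ u (x, t₀) (0, 1)) t₀ := by
  have h := (hasStrictFDerivAt_intervalIntegral_fst hu a (X t₀, t₀)).hasFDerivAt.comp_hasDerivAt
    (f := fun t => (X t, t)) t₀ (hX.prodMk (hasDerivAt_id' t₀))
  simp only [coprod_apply, toSpanSingleton_apply, smul_eq_mul, one_mul] at h
  exact h

theorem integral_fderiv_snd_eq_flux_sub {f : ℝ → ℝ} (hf : Differentiable ℝ f)
    (hu : ContDiff ℝ 1 u) {a b t : ℝ}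
    (hpde : ∀ x ∈ uIcc a b, deriv (fun s => u (x, s)) t + deriv (fun y => f (u (y, t))) x = 0) :
    ∫ x in a..b, fderiv ℝ u (x, t) (0, 1) = f (u (a, t)) - f (u (b, t)) := by
  have hu' := hu.continuous_fderiv one_ne_zero
  have hfu : Differentiable ℝ fun y => f (u (y, t)) := by
    have := hu.differentiable one_ne_zero
    fun_prop
  have hflux : ∀ x ∈ uIcc a b,
      HasDerivAt (fun y => -f (u (y, t))) (fderiv ℝ u (x, t) (0, 1)) x := by
    intro x hx
    rw [← (hasDerivAt_slice_snd (hu.differentiable one_ne_zero _)).deriv,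
      eq_neg_of_add_eq_zero_left (hpde x hx)]
    exact (hfu x).hasDerivAt.neg
  rw [integral_eq_sub_of_hasDerivAt hflux (Continuous.intervalIntegrable (by fun_prop) _ _)]
  ring

theorem hasDerivAt_intervalIntegral_of_conservationLaw {f : ℝ → ℝ} (hf : Differentiable ℝ f)
    (hu : ContDiff ℝ 1 u) (a : ℝ) {X : ℝ → ℝ} {X' t₀ : ℝ} (hX : HasDerivAt X X' t₀)
    (hpde : ∀ x ∈ uIcc a (X t₀),
      deriv (fun s => u (x, s)) t₀ + deriv (fun y => f (u (y, t₀))) x = 0) :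
    HasDerivAt (fun t => ∫ x in a..X t, u (x, t))
      (X' * u (X t₀, t₀) + (f (u (a, t₀)) - f (u (X t₀, t₀)))) t₀ := by
  rw [← integral_fderiv_snd_eq_flux_sub hf hu hpde]
  exact hasDerivAt_intervalIntegral_of_hasDerivAt_upper hu a hX

end

theorem stmt_14_general (f1 f1' f2 f2' : ℝ → ℝ)
    (hf1 : ∀ y, HasDerivAt f1 (f1' y) y)
    (hf2 : ∀ y, HasDerivAt f2 (f2' y) y)
    (u1 u2 : ℝ × ℝ → ℝ) (hu1 : ContDiff ℝ 1 u1) (hu2 : ContDiff ℝ 1 u2)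
    (L1 c1 c2 T : ℝ) (hflux : f1 c1 = f2 c2)
    (Ω1 Ω2 : Set (ℝ × ℝ))
    (hreg1 : ∀ t ∈ Set.Icc (0:ℝ) T, ∀ x ∈ Set.uIcc L1 (L1 + f1' c1 * t), (x, t) ∈ Ω1)
    (hreg2 : ∀ t ∈ Set.Icc (0:ℝ) T, ∀ x ∈ Set.uIcc (0:ℝ) (f2' c2 * t), (x, t) ∈ Ω2)
    (hpde1 : ∀ p ∈ Ω1,
      deriv (fun s => u1 (p.1, s)) p.2 + deriv (fun y => f1 (u1 (y, p.2))) p.1 = 0)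
    (hpde2 : ∀ p ∈ Ω2,
      deriv (fun s => u2 (p.1, s)) p.2 + deriv (fun y => f2 (u2 (y, p.2))) p.1 = 0)
    (hX1 : ∀ t ∈ Set.Icc (0:ℝ) T, u1 (L1 + f1' c1 * t, t) = c1)
    (hX2 : ∀ t ∈ Set.Icc (0:ℝ) T, u2 (f2' c2 * t, t) = c2)
    (hcouple : ∀ t ∈ Set.Icc (0:ℝ) T, f1 (u1 (L1, t)) = f2 (u2 (0, t))) :
    ∀ t ∈ Set.Icc (0:ℝ) T,
      (∫ x in (0:ℝ)..(f2' c2 * t), u2 (x, t)) -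
        (∫ x in L1..(L1 + f1' c1 * t), u1 (x, t)) =
      (c2 * f2' c2 - c1 * f1' c1) * t := by
  set C := c2 * f2' c2 - c1 * f1' c1
  have hI : ∀ s ∈ Icc 0 T, HasDerivAt (fun t => (∫ x in (0:ℝ)..(f2' c2 * t), u2 (x, t)) -
      ∫ x in L1..(L1 + f1' c1 * t), u1 (x, t)) C s := by
    intro s hs
    have h1 := hasDerivAt_intervalIntegral_of_conservationLaw (fun y => (hf1 y).differentiableAt)
      hu1 L1 (((hasDerivAt_id' s).const_mul (f1' c1)).const_add L1)
      fun x hx => hpde1 _ (hreg1 s hs x hx)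
    have h2 := hasDerivAt_intervalIntegral_of_conservationLaw (fun y => (hf2 y).differentiableAt)
      hu2 0 ((hasDerivAt_id' s).const_mul (f2' c2)) fun x hx => hpde2 _ (hreg2 s hs x hx)
    refine (h2.sub h1).congr_deriv ?_
    rw [hX1 s hs, hX2 s hs, hcouple s hs, hflux]
    ring
  have hC (s : ℝ) : HasDerivAt (fun t => C * t) C s :=
    ((hasDerivAt_id' s).const_mul C).congr_deriv (mul_one C)
  refine eq_of_has_deriv_right_eq (fun s hs => (hI s (Ico_subset_Icc_self hs)).hasDerivWithinAt)
    (fun s _ => (hC s).hasDerivWithinAt) (fun s hs => (hI s hs).continuousAt.continuousWithinAt)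
    (fun s _ => (hC s).continuousAt.continuousWithinAt) ?_
  simp

/-- At a bottleneck node joining an ingoing edge (ending at `L1`, flux `f1`)
to an outgoing edge (starting at `0`, flux `f2`), with `C¹` solutions `u1, u2` of the
respective conservation laws, extremal particles of constant values `c1, c2` with matched
fluxes `f1(c1) = f2(c2)` moving characteristically from the node, and the coupling
condition `f1(u1(L1,t)) = f2(u2(0,t))`, the excess area `I1` and virtual area `I2`
satisfy `I2(t) - I1(t) = (c2·f2'(c2) - c1·f1'(c1))·t` on `[0,T]`. -/
theorem stmt_14 (f1 f1' f2 f2' : ℝ → ℝ)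
    (hf1 : ∀ y, HasDerivAt f1 (f1' y) y) (hf1c : Continuous f1')
    (hf2 : ∀ y, HasDerivAt f2 (f2' y) y) (hf2c : Continuous f2')
    (u1 u2 : ℝ × ℝ → ℝ) (hu1 : ContDiff ℝ 1 u1) (hu2 : ContDiff ℝ 1 u2)
    (L1 c1 c2 T : ℝ) (hT : 0 < T) (hflux : f1 c1 = f2 c2)
    (Ω1 Ω2 : Set (ℝ × ℝ)) (hΩ1 : IsOpen Ω1) (hΩ2 : IsOpen Ω2)
    (hreg1 : ∀ t ∈ Set.Icc (0:ℝ) T, ∀ x ∈ Set.uIcc L1 (L1 + f1' c1 * t), (x, t) ∈ Ω1)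
    (hreg2 : ∀ t ∈ Set.Icc (0:ℝ) T, ∀ x ∈ Set.uIcc (0:ℝ) (f2' c2 * t), (x, t) ∈ Ω2)
    (hpde1 : ∀ p ∈ Ω1,
      deriv (fun s => u1 (p.1, s)) p.2 + deriv (fun y => f1 (u1 (y, p.2))) p.1 = 0)
    (hpde2 : ∀ p ∈ Ω2,
      deriv (fun s => u2 (p.1, s)) p.2 + deriv (fun y => f2 (u2 (y, p.2))) p.1 = 0)
    (hX1 : ∀ t ∈ Set.Icc (0:ℝ) T, u1 (L1 + f1' c1 * t, t) = c1)
    (hX2 : ∀ t ∈ Set.Icc (0:ℝ) T, u2 (f2' c2 * t, t) = c2)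
    (hcouple : ∀ t ∈ Set.Icc (0:ℝ) T, f1 (u1 (L1, t)) = f2 (u2 (0, t))) :
    ∀ t ∈ Set.Icc (0:ℝ) T,
      (∫ x in (0:ℝ)..(f2' c2 * t), u2 (x, t)) -
        (∫ x in L1..(L1 + f1' c1 * t), u1 (x, t)) =
      (c2 * f2' c2 - c1 * f1' c1) * t :=
  stmt_14_general f1 f1' f2 f2' hf1 hf2 u1 u2 hu1 hu2 L1 c1 c2 T hflux Ω1 Ω2 hreg1 hreg2 hpde1 hpde2
    hX1 hX2 hcouple
end
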